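/- arXiv:2002.00917 — 3 statements merged into one kernel-verified Lean document; each statement's English description precedes it below -/
import Mathlib

section
/- If A is symmetric positive definite with block form A = [[B, E],[Eᵀ, C]], S = C - Eᵀ B⁻¹ E is the Schur complement, C₀ is the block diagonal part of C (with respect to a fixed partition of C into s×s blocks), and Eₛ = C₀ - S, then every eigenvalue of C₀⁻¹Eₛ is real and strictly less than 1. -/
/-!
If `C₀⁻¹ Eₛ v = μ v` with `v ≠ 0`, then `S v = (1 - μ) C₀ v`, so `1 - μ = v* S v / v* C₀ v`.
Both quadratic forms are positive: `S` is positive definite as the Schur complement of the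
positive definite `A`, and `C₀` because its quadratic form is the sum of the quadratic forms of
`C` restricted to the blocks of the partition. Hence `1 - μ` is a positive real number.
-/

open Matrix Finset
open scoped ComplexOrder

namespace Matrix

variable {n : Type*} [Fintype n] {𝕜 : Type*} [RCLike 𝕜]

theorem exists_mulVec_eq_smul_of_mem_spectrum {K : Type*} [Field K] [DecidableEq n]
    {M : Matrix n n K} {μ : K} (h : μ ∈ spectrum K M) : ∃ v ≠ 0, M *ᵥ v = μ • v := by
  rw [← spectrum_toLin', ← Module.End.hasEigenvalue_iff_mem_spectrum] at h
  obtain ⟨v, hv⟩ := h.exists_hasEigenvector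
  exact ⟨v, hv.2, by simpa using hv.apply_eq_smul⟩

theorem PosDef.pos_of_mulVec_eq_smul_mulVec {S T : Matrix n n 𝕜} (hS : S.PosDef)
    (hT : T.PosDef) {v : n → 𝕜} (hv : v ≠ 0) {c : 𝕜} (h : S *ᵥ v = c • T *ᵥ v) : 0 < c := by
  have hq : star v ⬝ᵥ S *ᵥ v = c * (star v ⬝ᵥ T *ᵥ v) := by
    rw [h, dotProduct_smul, smul_eq_mul]
  have hTv := hT.dotProduct_mulVec_pos hv
  rw [eq_div_of_mul_eq hTv.ne' hq.symm]
  exact div_pos (hS.dotProduct_mulVec_pos hv) hTv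

open scoped MatrixOrder in
theorem PosDef.map_ofReal {M : Matrix n n ℝ} (hM : M.PosDef) :
    (M.map ((↑) : ℝ → 𝕜)).PosDef := by
  classical
  obtain ⟨y, rfl⟩ := CStarAlgebra.nonneg_iff_eq_star_mul_self.mp hM.posSemidef.nonneg
  rw [← RCLike.algebraMap_eq_ofReal]
  have hmap : (star y * y).map (algebraMap ℝ 𝕜) =
      (y.map (algebraMap ℝ 𝕜))ᴴ * y.map (algebraMap ℝ 𝕜) := by
    rw [← conjTranspose_map _ fun _ ↦ by simp, ← star_eq_conjTranspose, Matrix.map_mul]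
  rw [(hmap ▸ posSemidef_conjTranspose_mul_self _ :).posDef_iff_det_ne_zero]
  exact (algebraMap ℝ 𝕜).map_det (star y * y) ▸ (map_ne_zero _).mpr hM.det_pos.ne'

theorem PosDef.schur_complement_of_fromBlocks₁₁ {m : Type*} [Fintype m] [DecidableEq m]
    {A : Matrix m m 𝕜} {B : Matrix m n 𝕜} {D : Matrix n n 𝕜}
    (h : (fromBlocks A B Bᴴ D).PosDef) : (D - Bᴴ * A⁻¹ * B).PosDef := by
  classical
  have hA : A.PosDef := h.submatrix Sum.inl_injective
  have := hA.isUnit.invertible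
  refine ((hA.fromBlocks₁₁ B D).mp h.posSemidef).posDef_iff_det_ne_zero.mpr ?_
  have hdet := h.det_pos.ne'
  rw [det_fromBlocks₁₁, invOf_eq_nonsing_inv] at hdet
  exact right_ne_zero_of_mul hdet

def blockDiagonalPart {α ι : Type*} [Zero α] [DecidableEq ι] (π : n → ι) (M : Matrix n n α) :
    Matrix n n α :=
  of fun i j ↦ if π i = π j then M i j else 0

theorem star_dotProduct_blockDiagonalPart_mulVec {ι : Type*} [Fintype ι] [DecidableEq ι]
    (π : n → ι) (M : Matrix n n 𝕜) (x : n → 𝕜) :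
    star x ⬝ᵥ blockDiagonalPart π M *ᵥ x =
      ∑ k, star (fun i ↦ if π i = k then x i else 0) ⬝ᵥ
        M *ᵥ fun i ↦ if π i = k then x i else 0 := by
  have hterm : ∀ i j, star (x i) * (blockDiagonalPart π M i j * x j) =
      ∑ k, star (if π i = k then x i else 0) * (M i j * if π j = k then x j else 0) := by
    intro i j
    by_cases h : π i = π j <;> simp [blockDiagonalPart, h, apply_ite star]
  simp only [dotProduct, mulVec, mul_sum, Pi.star_apply, hterm]
  exact (sum_congr rfl fun _ _ ↦ sum_comm).trans sum_comm

theorem PosDef.blockDiagonalPart {ι : Type*} [Fintype ι] [DecidableEq ι] {M : Matrix n n 𝕜}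
    (hM : M.PosDef) (π : n → ι) : (Matrix.blockDiagonalPart π M).PosDef := by
  have hHerm : (Matrix.blockDiagonalPart π M).IsHermitian := by
    ext i j
    simp [Matrix.blockDiagonalPart, eq_comm (a := π i), ← hM.1.apply i j,
      apply_ite (starRingEnd 𝕜)]
  refine .of_dotProduct_mulVec_pos hHerm fun x hx ↦ ?_
  obtain ⟨i, hi⟩ := Function.ne_iff.mp hx
  rw [star_dotProduct_blockDiagonalPart_mulVec]
  refine sum_pos' (fun k _ ↦ hM.posSemidef.dotProduct_mulVec_nonneg _) ⟨π i, mem_univ _, ?_⟩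
  exact hM.dotProduct_mulVec_pos fun h ↦ hi (by simpa using congrFun h i)

end Matrix

/-- If A = [[B,E],[Eᵀ,C]] is SPD, S = C - EᵀB⁻¹E, C₀ the block
diagonal part of C (w.r.t. a partition given by π), and Eₛ = C₀ - S, then every
eigenvalue of C₀⁻¹Eₛ is real and strictly less than 1. -/
theorem stmt2 (p q s : ℕ)
    (B : Matrix (Fin p) (Fin p) ℝ) (E : Matrix (Fin p) (Fin q) ℝ)
    (C : Matrix (Fin q) (Fin q) ℝ)
    (hA : (Matrix.fromBlocks B E Eᵀ C).PosDef)
    (π : Fin q → Fin s)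
    (C₀ : Matrix (Fin q) (Fin q) ℝ)
    (hC₀ : ∀ i j, C₀ i j = if π i = π j then C i j else 0)
    (S Es : Matrix (Fin q) (Fin q) ℝ)
    (hS : S = C - Eᵀ * B⁻¹ * E) (hEs : Es = C₀ - S) :
    ∀ μ ∈ spectrum ℂ ((C₀⁻¹ * Es).map (Complex.ofReal)),
      μ.im = 0 ∧ μ.re < 1 := by
  rw [← conjTranspose_eq_transpose_of_trivial] at hA hS
  have hSpd : S.PosDef := hS ▸ hA.schur_complement_of_fromBlocks₁₁
  have hC : C.PosDef := hA.submatrix Sum.inr_injective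
  have hC₀pd : C₀.PosDef := (ext hC₀ : C₀ = blockDiagonalPart π C) ▸ hC.blockDiagonalPart π
  have hS_eq : S = C₀ - C₀ * (C₀⁻¹ * Es) := by
    rw [mul_nonsing_inv_cancel_left _ _ hC₀pd.det_pos.ne'.isUnit, hEs, sub_sub_cancel]
  intro μ hμ
  obtain ⟨v, hv0, hv⟩ := exists_mulVec_eq_smul_of_mem_spectrum hμ
  have hgen : S.map Complex.ofReal *ᵥ v = (1 - μ) • C₀.map Complex.ofReal *ᵥ v := by
    have hmul : (C₀ * (C₀⁻¹ * Es)).map Complex.ofReal =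
        C₀.map Complex.ofReal * (C₀⁻¹ * Es).map Complex.ofReal :=
      Matrix.map_mul (f := Complex.ofRealHom)
    rw [hS_eq, Matrix.map_sub _ Complex.ofReal_sub, hmul, sub_mulVec, ← mulVec_mulVec, hv,
      mulVec_smul, sub_smul, one_smul]
  obtain ⟨hre, him⟩ := Complex.pos_iff.mp <|
    hSpd.map_ofReal.pos_of_mulVec_eq_smul_mulVec hC₀pd.map_ofReal hv0 hgen
  simp only [Complex.sub_re, Complex.one_re, Complex.sub_im, Complex.one_im] at hre him
  exact ⟨by linarith, by linarith⟩
end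

section
/- With S_app⁻¹ := [Σ_{i=0}^{m}(C₀⁻¹Eₛ)ⁱ C₀⁻¹](I - VHVᵀ)⁻¹ and S⁻¹ = [Σ_{i=0}^{m}(C₀⁻¹Eₛ)ⁱ C₀⁻¹](I - E_rr(m))⁻¹, one has the exact identity S⁻¹ - S_app⁻¹ = S⁻¹ X Z⁻¹, where X = E_rr(m) - VHVᵀ and Z = I - VHVᵀ. -/
open Matrix Finset

/-- exact identity S⁻¹ - S_app⁻¹ = S⁻¹ X Z⁻¹ with
X = E_rr(m) - VHVᵀ and Z = I - VHVᵀ. -/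
theorem stmt7 (q r : ℕ) (C₀ Es : Matrix (Fin q) (Fin q) ℝ)
    (hC₀ : IsUnit C₀.det)
    (S : Matrix (Fin q) (Fin q) ℝ) (hS : S = C₀ - Es) (hSinv : IsUnit S.det)
    (m : ℕ) (P Err : Matrix (Fin q) (Fin q) ℝ)
    (hP : P = (∑ i ∈ Finset.range (m + 1), (C₀⁻¹ * Es) ^ i) * C₀⁻¹)
    (hErr : Err = 1 - S * P)
    (hIE : IsUnit ((1 : Matrix (Fin q) (Fin q) ℝ) - Err).det)
    (V : Matrix (Fin q) (Fin r) ℝ) (H : Matrix (Fin r) (Fin r) ℝ)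
    (X Z Sapp : Matrix (Fin q) (Fin q) ℝ)
    (hX : X = Err - V * H * Vᵀ) (hZ : Z = 1 - V * H * Vᵀ)
    (hZinv : IsUnit Z.det)
    (hSapp : Sapp = P * Z⁻¹) :
    S⁻¹ - Sapp = S⁻¹ * X * Z⁻¹ := by
  have hPs : P = S⁻¹ * (1 - Err) := by
    have h1 : S * P = 1 - Err := by rw [hErr, sub_sub_cancel]
    calc P = (S⁻¹ * S) * P := by rw [Matrix.nonsing_inv_mul S hSinv, one_mul]
    _ = S⁻¹ * (S * P) := by rw [mul_assoc]
    _ = S⁻¹ * (1 - Err) := by rw [h1]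
  have hXz : X = Err - 1 + Z := by rw [hX, hZ]; abel
  have hZZ : Z * Z⁻¹ = 1 := Matrix.mul_nonsing_inv Z hZinv
  rw [hSapp, hPs, hXz]
  calc S⁻¹ - S⁻¹ * (1 - Err) * Z⁻¹
      = S⁻¹ * (Z * Z⁻¹) - S⁻¹ * (1 - Err) * Z⁻¹ := by rw [hZZ, mul_one]
    _ = S⁻¹ * (Err - 1 + Z) * Z⁻¹ := by noncomm_ring
end

section
/- The preconditioned Schur complement S_app⁻¹ S is similar to I - Z⁻¹X, where Z = I - VHVᵀ and X = E_rr(m) - VHVᵀ; consequently every eigenvalue λ of S_app⁻¹S satisfies λ = 1 - μ for some eigenvalue μ of Z⁻¹X. -/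
open Matrix Finset

/-- S_app⁻¹S is similar (via P) to I - Z⁻¹X; consequently every
eigenvalue λ of S_app⁻¹S equals 1 - μ for some eigenvalue μ of Z⁻¹X. -/
theorem stmt9 (q r : ℕ) (C₀ Es : Matrix (Fin q) (Fin q) ℝ)
    (hC₀ : IsUnit C₀.det)
    (S : Matrix (Fin q) (Fin q) ℝ) (hS : S = C₀ - Es) (hSinv : IsUnit S.det)
    (m : ℕ) (P Err : Matrix (Fin q) (Fin q) ℝ)
    (hP : P = (∑ i ∈ Finset.range (m + 1), (C₀⁻¹ * Es) ^ i) * C₀⁻¹)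
    (hPinv : IsUnit P.det)
    (hErr : Err = 1 - S * P)
    (hIE : IsUnit ((1 : Matrix (Fin q) (Fin q) ℝ) - Err).det)
    (V : Matrix (Fin q) (Fin r) ℝ) (H : Matrix (Fin r) (Fin r) ℝ)
    (X Z Sapp : Matrix (Fin q) (Fin q) ℝ)
    (hX : X = Err - V * H * Vᵀ) (hZ : Z = 1 - V * H * Vᵀ)
    (hZinv : IsUnit Z.det)
    (hSapp : Sapp = P * Z⁻¹) :
    Sapp * S = P * (1 - Z⁻¹ * X) * P⁻¹ ∧
      ∀ l ∈ spectrum ℂ ((Sapp * S).map (Complex.ofReal)),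
        ∃ μ ∈ spectrum ℂ ((Z⁻¹ * X).map (Complex.ofReal)), l = 1 - μ := by
  have hZX : Z - X = S * P := by
    rw [hZ, hX, hErr]; abel
  have hone : (1 : Matrix (Fin q) (Fin q) ℝ) - Z⁻¹ * X = Z⁻¹ * (S * P) := by
    rw [← hZX, Matrix.mul_sub, Matrix.nonsing_inv_mul Z hZinv]
  have h1 : Sapp * S = P * (1 - Z⁻¹ * X) * P⁻¹ := by
    rw [hSapp, hone]
    rw [show P * (Z⁻¹ * (S * P)) * P⁻¹ = P * Z⁻¹ * S * (P * P⁻¹) by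
      noncomm_ring]
    rw [Matrix.mul_nonsing_inv P hPinv, Matrix.mul_one]
  refine ⟨h1, ?_⟩
  intro l hl
  set φ := (Complex.ofRealHom.mapMatrix : Matrix (Fin q) (Fin q) ℝ →+* Matrix (Fin q) (Fin q) ℂ)
  have hmap : ∀ A : Matrix (Fin q) (Fin q) ℝ, A.map Complex.ofReal = φ A := fun A => rfl
  have hu1 : φ P * φ P⁻¹ = 1 := by
    rw [← _root_.map_mul, Matrix.mul_nonsing_inv P hPinv, _root_.map_one]
  have hu2 : φ P⁻¹ * φ P = 1 := by
    rw [← _root_.map_mul, Matrix.nonsing_inv_mul P hPinv, _root_.map_one]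
  set u : (Matrix (Fin q) (Fin q) ℂ)ˣ := ⟨φ P, φ P⁻¹, hu1, hu2⟩
  have hspec : spectrum ℂ ((Sapp * S).map Complex.ofReal)
      = spectrum ℂ ((1 : Matrix (Fin q) (Fin q) ℂ) - φ (Z⁻¹ * X)) := by
    rw [hmap, h1]
    have : φ (P * (1 - Z⁻¹ * X) * P⁻¹)
        = (u : Matrix (Fin q) (Fin q) ℂ) * ((1 : Matrix (Fin q) (Fin q) ℂ) - φ (Z⁻¹ * X)) * ((u⁻¹ : (Matrix (Fin q) (Fin q) ℂ)ˣ) : Matrix (Fin q) (Fin q) ℂ) := by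
      simp only [_root_.map_mul, map_sub, _root_.map_one]; rfl
    rw [this]
    exact spectrum.units_conjugate
  rw [hspec] at hl
  have hsing := spectrum.singleton_sub_eq (φ (Z⁻¹ * X)) (1 : ℂ)
  rw [_root_.map_one (algebraMap ℂ (Matrix (Fin q) (Fin q) ℂ))] at hsing
  rw [← hsing] at hl
  obtain ⟨a, ha, b, hb, hab⟩ := Set.mem_sub.mp hl
  rw [Set.mem_singleton_iff] at ha
  exact ⟨b, by rwa [hmap], by rw [← hab, ha]⟩
end
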